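/- arXiv:1905.00555 — 9 statements merged into one kernel-verified Lean document; each statement's English description precedes it below -/
import Mathlib

section
/- Define τ_ES = 1/(b+c), τ_EP = 1/(d+f), p = c/(b+c), q = d/(d+f), T₁ = (τ_ES + p·τ_EP)/(1 − p·q) and T₂ = (τ_EP + q·τ_ES)/(1 − p·q). Then the unique stationary distribution of the chain satisfies π_E = 1/(1 + a·T₁ + g·T₂); equivalently, the sequestered fraction R = π_ES + π_EP satisfies R = 1 − 1/(1 + a·T₁ + g·T₂). -/
def IsStat (a b c d f g pE pES pEP : ℝ) : Prop :=
  0 ≤ pE ∧ 0 ≤ pES ∧ 0 ≤ pEP ∧ pE + pES + pEP = 1 ∧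
  (a + g) * pE = b * pES + f * pEP ∧
  (b + c) * pES = a * pE + d * pEP ∧
  (d + f) * pEP = c * pES + g * pE

/-!
The linear system for the mean first passage times `T₁, T₂` to `E` has determinant
`1 - p q = D / ((b + c)(d + f))` with `D = bd + bf + cf`, and Cramer's rule gives
`T₁ = (c + d + f) / D`, `T₂ = (b + c + d) / D`. On the other hand, eliminating `π_ES` and
`π_EP` from the balance equations gives
`π_E · (D + a (c + d + f) + g (b + c + d)) = D`, and dividing through by `D` this is
`π_E · (1 + a T₁ + g T₂) = 1`.
-/

/-- The total weight of the spanning trees of the cycle directed into `E`. -/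
def treeWeightE (b c d f : ℝ) : ℝ := b * d + b * f + c * f

lemma treeWeightE_pos {b c d f : ℝ} (hb : 0 < b) (hc : 0 < c) (hd : 0 < d) (hf : 0 < f) :
    0 < treeWeightE b c d f := by
  unfold treeWeightE; positivity

lemma one_sub_branch_mul_branch {b c d f : ℝ} (hbc : b + c ≠ 0) (hdf : d + f ≠ 0) :
    1 - c / (b + c) * (d / (d + f)) = treeWeightE b c d f / ((b + c) * (d + f)) := by
  unfold treeWeightE
  field_simp
  ring

lemma meanPassageTime_ES_eq {b c d f : ℝ} (hbc : b + c ≠ 0) (hdf : d + f ≠ 0) :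
    (1 / (b + c) + c / (b + c) * (1 / (d + f))) / (1 - c / (b + c) * (d / (d + f))) =
      (c + d + f) / treeWeightE b c d f := by
  rw [one_sub_branch_mul_branch hbc hdf]
  field_simp
  ring

lemma meanPassageTime_EP_eq {b c d f : ℝ} (hbc : b + c ≠ 0) (hdf : d + f ≠ 0) :
    (1 / (d + f) + d / (d + f) * (1 / (b + c))) / (1 - c / (b + c) * (d / (d + f))) =
      (b + c + d) / treeWeightE b c d f := by
  rw [one_sub_branch_mul_branch hbc hdf]
  field_simp

lemma IsStat.pE_mul_eq {a b c d f g pE pES pEP : ℝ} (h : IsStat a b c d f g pE pES pEP) :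
    pE * (treeWeightE b c d f + a * (c + d + f) + g * (b + c + d)) = treeWeightE b c d f := by
  obtain ⟨-, -, -, hsum, -, hES, hEP⟩ := h
  unfold treeWeightE
  linear_combination (b * d + b * f + c * f) * hsum - (c + d + f) * hES - (b + c + d) * hEP

lemma IsStat.pE_eq {a b c d f g pE pES pEP : ℝ} (h : IsStat a b c d f g pE pES pEP)
    (hD : treeWeightE b c d f ≠ 0) :
    pE = 1 / (1 + a * ((c + d + f) / treeWeightE b c d f) +
      g * ((b + c + d) / treeWeightE b c d f)) := by
  have hmul := h.pE_mul_eq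
  have hN : treeWeightE b c d f + a * (c + d + f) + g * (b + c + d) ≠ 0 := by
    rintro hN
    exact hD (by rw [← hmul, hN, mul_zero])
  field_simp
  linear_combination hmul

theorem stmt_5_general
    (a b c d f g pE pES pEP : ℝ)
    (hb : 0 < b) (hc : 0 < c) (hd : 0 < d) (hf : 0 < f)
    (hstat : IsStat a b c d f g pE pES pEP) :
    let τES : ℝ := 1 / (b + c)
    let τEP : ℝ := 1 / (d + f)
    let p : ℝ := c / (b + c)
    let q : ℝ := d / (d + f)
    let T₁ : ℝ := (τES + p * τEP) / (1 - p * q)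
    let T₂ : ℝ := (τEP + q * τES) / (1 - p * q)
    pE = 1 / (1 + a * T₁ + g * T₂) ∧
    pES + pEP = 1 - 1 / (1 + a * T₁ + g * T₂) := by
  intro τES τEP p q T₁ T₂
  have hbc : b + c ≠ 0 := by positivity
  have hdf : d + f ≠ 0 := by positivity
  have hD := (treeWeightE_pos hb hc hd hf).ne'
  have hE : pE = 1 / (1 + a * T₁ + g * T₂) := by
    rw [show T₁ = _ from meanPassageTime_ES_eq hbc hdf,
      show T₂ = _ from meanPassageTime_EP_eq hbc hdf]
    exact hstat.pE_eq hD
  refine ⟨hE, ?_⟩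
  obtain ⟨-, -, -, hsum, -⟩ := hstat
  linarith

/-- The unique stationary distribution of the cycle chain satisfies
`π_E = 1/(1 + a·T₁ + g·T₂)`, where `T₁, T₂` are the mean first passage times to
`E` from `ES` and `EP`; equivalently, the sequestered fraction
`R = π_ES + π_EP` equals `1 − 1/(1 + a·T₁ + g·T₂)`. -/
theorem stmt_5
    (a b c d f g pE pES pEP : ℝ)
    (ha : 0 < a) (hb : 0 < b) (hc : 0 < c) (hd : 0 < d) (hf : 0 < f) (hg : 0 < g)
    (hstat : IsStat a b c d f g pE pES pEP) :
    let τES : ℝ := 1 / (b + c)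
    let τEP : ℝ := 1 / (d + f)
    let p : ℝ := c / (b + c)
    let q : ℝ := d / (d + f)
    let T₁ : ℝ := (τES + p * τEP) / (1 - p * q)
    let T₂ : ℝ := (τEP + q * τES) / (1 - p * q)
    pE = 1 / (1 + a * T₁ + g * T₂) ∧
    pES + pEP = 1 - 1 / (1 + a * T₁ + g * T₂) :=
  stmt_5_general a b c d f g pE pES pEP hb hc hd hf hstat
end

section
/- (Region I behaviour.) Fix x ∈ ℝ and let y₁ < y₂ with y₂ ≤ x + Δμ + ΔGc (so that both points lie in the closure of Region I). Then R(x, y₂) < R(x, y₁); if moreover S·e^(Δμ) > P, then Ψ(x, y₂) > Ψ(x, y₁). That is, within Region I, increasing the product binding free energy ΔG_EP strictly decreases the sequestered fraction and strictly increases the flux. -/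
open Real Filter

/-!
In the closure of Region I the catalytic step runs at its full rate `kcat`, while both exits
from `EP` (back to `ES` and release to `E`) are proportional to `t = e^y`. By the Markov chain
tree theorem the free fraction `π_E` and the cycle flux are then both of the form
`α t / (β t + γ)` with `β ≥ 0`, `γ > 0`, hence strictly increasing in `t` as soon as `α > 0`.
For `π_E` this is automatic; for the flux, `α` is the difference of the products of the rates
around the cycle in the two directions, positive exactly when `S e^Δμ > P`.
-/

theorem strictMonoOn_mul_div_mul_add {α β γ : ℝ} (hα : 0 < α) (hβ : 0 ≤ β) (hγ : 0 < γ) :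
    StrictMonoOn (fun t => α * t / (β * t + γ)) (Set.Ici 0) := by
  intro s hs t ht hst
  simp only [Set.mem_Ici] at hs ht
  rw [div_lt_div_iff₀ (by positivity) (by positivity)]
  nlinarith [mul_pos (mul_pos hα hγ) (sub_pos.2 hst)]

namespace IsStat

variable {a b c d f g pE pES pEP : ℝ}

theorem pE_eq_s6 (h : IsStat a b c d f g pE pES pEP)
    (hb : 0 < b) (hc : 0 ≤ c) (hd : 0 ≤ d) (hf : 0 < f) :
    pE = (b*d + b*f + c*f) /
      (b*d + b*f + c*f + (a*d + a*f + g*d) + (a*c + g*b + g*c)) := by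
  obtain ⟨-, -, -, hsum, h1, -, h3⟩ := h
  have hw : b*d + b*f + c*f ≠ 0 := by positivity
  have hE : pE * (b*d + b*f + c*f + (a*d + a*f + g*d) + (a*c + g*b + g*c)) =
      b*d + b*f + c*f := by
    linear_combination (b*d + b*f + c*f) * hsum + (d + f + c) * h1 + (f - b) * h3
  exact eq_div_of_mul_eq (right_ne_zero_of_mul (hE ▸ hw)) hE

theorem flux_eq (h : IsStat a b c d f g pE pES pEP)
    (hb : 0 < b) (hc : 0 ≤ c) (hd : 0 ≤ d) (hf : 0 < f) :
    a*pE - b*pES = (a*c*f - g*d*b) /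
      (b*d + b*f + c*f + (a*d + a*f + g*d) + (a*c + g*b + g*c)) := by
  have hpE := h.pE_eq_s6 hb hc hd hf
  obtain ⟨-, -, -, -, h1, -, h3⟩ := h
  have hw : b*d + b*f + c*f ≠ 0 := by positivity
  have hES : (b*d + b*f + c*f) * pES = (a*d + a*f + g*d) * pE := by
    linear_combination (-(d + f)) * h1 - f * h3
  apply mul_left_cancel₀ hw
  rw [mul_div_left_comm, ← hpE]
  linear_combination (-b) * hES

variable {D F t₁ t₂ pE₁ pES₁ pEP₁ pE₂ pES₂ pEP₂ : ℝ}

theorem pE_lt_of_scale_lt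
    (h₁ : IsStat a b c (D*t₁) (F*t₁) g pE₁ pES₁ pEP₁)
    (h₂ : IsStat a b c (D*t₂) (F*t₂) g pE₂ pES₂ pEP₂)
    (ha : 0 < a) (hb : 0 < b) (hc : 0 < c) (hD : 0 < D) (hF : 0 < F) (hg : 0 < g)
    (ht₁ : 0 < t₁) (ht : t₁ < t₂) : pE₁ < pE₂ := by
  have ht₂ : 0 < t₂ := ht₁.trans ht
  rw [h₁.pE_eq_s6 hb hc.le (by positivity) (by positivity),
    h₂.pE_eq_s6 hb hc.le (by positivity) (by positivity)]
  convert strictMonoOn_mul_div_mul_add (α := b*D + b*F + c*F)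
    (β := b*D + b*F + c*F + a*D + a*F + g*D) (γ := a*c + g*b + g*c)
    (by positivity) (by positivity) (by positivity) ht₁.le ht₂.le ht using 1 <;> beta_reduce <;> congr 1 <;> ring

theorem flux_lt_of_scale_lt
    (h₁ : IsStat a b c (D*t₁) (F*t₁) g pE₁ pES₁ pEP₁)
    (h₂ : IsStat a b c (D*t₂) (F*t₂) g pE₂ pES₂ pEP₂)
    (ha : 0 < a) (hb : 0 < b) (hc : 0 < c) (hD : 0 < D) (hF : 0 < F) (hg : 0 < g)
    (hcycle : g*D*b < a*c*F) (ht₁ : 0 < t₁) (ht : t₁ < t₂) :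
    a*pE₁ - b*pES₁ < a*pE₂ - b*pES₂ := by
  have ht₂ : 0 < t₂ := ht₁.trans ht
  rw [h₁.flux_eq hb hc.le (by positivity) (by positivity),
    h₂.flux_eq hb hc.le (by positivity) (by positivity)]
  convert strictMonoOn_mul_div_mul_add (α := a*c*F - g*D*b)
    (β := b*D + b*F + c*F + a*D + a*F + g*D) (γ := a*c + g*b + g*c)
    (sub_pos.2 hcycle) (by positivity) (by positivity) ht₁.le ht₂.le ht using 1 <;> beta_reduce <;> congr 1 <;> ring

theorem regionI_rates {kcat dmu dGc x y : ℝ} (hy : y ≤ x + dmu + dGc)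
    (h : IsStat a b (kcat * min 1 (exp (x - y + dmu + dGc)))
      (kcat * exp dGc * min 1 (exp (y - x - dmu - dGc))) f g pE pES pEP) :
    IsStat a b kcat (kcat * exp (-(x + dmu)) * exp y) f g pE pES pEP := by
  rw [min_eq_left (one_le_exp (by linarith)), mul_one,
    min_eq_right (exp_le_one_iff.2 (by linarith)), mul_assoc, ← exp_add] at h
  rwa [mul_assoc, ← exp_add, show -(x + dmu) + y = dGc + (y - x - dmu - dGc) by ring]

end IsStat

/-- Region I behaviour: for fixed `x`, increasing the product binding free
energy within (the closure of) Region I strictly decreases the sequestered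
fraction and, when `S·e^Δμ > P`, strictly increases the flux. -/
theorem stmt_6
    (k0 k1 kcat S P dmu dGc : ℝ)
    (hk0 : 0 < k0) (hk1 : 0 < k1) (hkcat : 0 < kcat) (hS : 0 < S) (hP : 0 < P)
    (pE pES pEP R Psi : ℝ → ℝ → ℝ)
    (hstat : ∀ x y : ℝ,
      IsStat (k0 * S) (k0 * exp x)
        (kcat * min 1 (exp (x - y + dmu + dGc)))
        (kcat * exp dGc * min 1 (exp (y - x - dmu - dGc)))
        (k1 * exp y) (k1 * P)
        (pE x y) (pES x y) (pEP x y))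
    (hR : ∀ x y : ℝ, R x y = pES x y + pEP x y)
    (hPsi : ∀ x y : ℝ, Psi x y = k0 * S * pE x y - k0 * exp x * pES x y)
    (x y₁ y₂ : ℝ) (hy : y₁ < y₂) (hreg : y₂ ≤ x + dmu + dGc) :
    R x y₂ < R x y₁ ∧ (S * exp dmu > P → Psi x y₂ > Psi x y₁) := by
  have h₁ := (hstat x y₁).regionI_rates (hy.le.trans hreg)
  have h₂ := (hstat x y₂).regionI_rates hreg
  have hexp : exp y₁ < exp y₂ := exp_lt_exp.2 hy
  constructor
  · have hpE := h₁.pE_lt_of_scale_lt h₂ (by positivity) (by positivity) hkcat (by positivity)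
      hk1 (by positivity) (exp_pos _) hexp
    rw [hR, hR]
    linarith [h₁.2.2.2.1, h₂.2.2.2.1]
  · intro hSP
    have hPS : P * (exp (-(x + dmu)) * exp x) < S := by
      rwa [← exp_add, show -(x + dmu) + x = -dmu by ring, exp_neg, ← div_eq_mul_inv,
        div_lt_iff₀ (exp_pos _)]
    have hcycle : k1 * P * (kcat * exp (-(x + dmu))) * (k0 * exp x) < k0 * S * kcat * k1 :=
      calc k1 * P * (kcat * exp (-(x + dmu))) * (k0 * exp x)
          = (k0 * k1 * kcat) * (P * (exp (-(x + dmu)) * exp x)) := by ring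
        _ < (k0 * k1 * kcat) * S := by gcongr
        _ = k0 * S * kcat * k1 := by ring
    rw [hPsi, hPsi]
    exact h₁.flux_lt_of_scale_lt h₂ (by positivity) (by positivity) hkcat (by positivity)
      hk1 (by positivity) hcycle (exp_pos _) hexp
end

section
/- (Region II behaviour.) Fix y ∈ ℝ and let x₁ < x₂ with x₂ ≤ y − Δμ − ΔGc (so that both points lie in the closure of Region II). Then R(x₂, y) < R(x₁, y); if moreover S·e^(Δμ) > P, then Ψ(x₂, y) > Ψ(x₁, y). That is, within Region II, increasing the substrate binding free energy ΔG_ES strictly decreases the sequestered fraction and strictly increases the flux. -/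
/-!
In the closure of Region II the forward catalytic rate is `γ·e^x` with `γ = kcat·e^(Δμ+ΔGc−y)`
and the backward one is the constant `kcat·e^(ΔGc)`, so the two rates leaving `ES` are both
proportional to `u = e^x`. Solving the cycle by the matrix-tree theorem then gives
`π_E = A·u / (C + D·u)` and `Ψ = (aγf − βdg)·u / (C + D·u)` with `A, D ≥ 0 < C` independent of
`u`, and `aγf − βdg` is a positive multiple of `S·e^(Δμ) − P`. Both are strictly increasing in `u`,
and `R = 1 − π_E`.
-/

open Real

lemma mul_div_add_mul_lt_mul_div_add_mul {N C D u v : ℝ} (hN : 0 < N) (hC : 0 < C)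
    (hD : 0 ≤ D) (hu : 0 < u) (huv : u < v) :
    N * u / (C + u * D) < N * v / (C + v * D) := by
  have hv : 0 < v := hu.trans huv
  rw [div_lt_div_iff₀ (by positivity) (by positivity)]
  nlinarith [mul_pos (mul_pos hN hC) (sub_pos.mpr huv)]

namespace IsStat

variable {a b c d f g pE pES pEP : ℝ}

/-- Kirchhoff's matrix-tree theorem for the three-cycle: each state's weight is the sum over
the spanning trees directed into it. -/
theorem mul_eq_treeWeight (h : IsStat a b c d f g pE pES pEP) :
    (b*d + b*f + c*f + (a*d + a*f + d*g) + (a*c + b*g + c*g)) * pE = b*d + b*f + c*f ∧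
    (b*d + b*f + c*f + (a*d + a*f + d*g) + (a*c + b*g + c*g)) * pES = a*d + a*f + d*g := by
  obtain ⟨-, -, -, hsum, hE, hES, hEP⟩ := h
  constructor
  · linear_combination (b*d + b*f + c*f) * hsum - (d + f + c) * hES - (b + c + d) * hEP
  · linear_combination (a*d + a*f + d*g) * hsum + (d + f) * hES + (d - g - a) * hEP - g * hE

variable {β γ u : ℝ}

theorem pE_eq_of_proportional (ha : 0 < a) (hβ : 0 < β) (hγ : 0 < γ) (hd : 0 < d)
    (hf : 0 < f) (hg : 0 < g) (hu : 0 < u) (h : IsStat a (β*u) (γ*u) d f g pE pES pEP) :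
    pE = (β*d + β*f + γ*f) * u /
      (a*d + a*f + d*g + u * (β*d + β*f + γ*f + (a*γ + β*g + γ*g))) := by
  rw [eq_div_iff (by positivity)]
  linear_combination h.mul_eq_treeWeight.1

theorem flux_eq_of_proportional (ha : 0 < a) (hβ : 0 < β) (hγ : 0 < γ) (hd : 0 < d)
    (hf : 0 < f) (hg : 0 < g) (hu : 0 < u) (h : IsStat a (β*u) (γ*u) d f g pE pES pEP) :
    a * pE - β * u * pES = (a*γ*f - β*d*g) * u /
      (a*d + a*f + d*g + u * (β*d + β*f + γ*f + (a*γ + β*g + γ*g))) := by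
  rw [eq_div_iff (by positivity)]
  obtain ⟨hE, hES⟩ := h.mul_eq_treeWeight
  linear_combination a * hE - β * u * hES

variable {v pE' pES' pEP' : ℝ}

theorem pE_lt_of_proportional (ha : 0 < a) (hβ : 0 < β) (hγ : 0 < γ) (hd : 0 < d)
    (hf : 0 < f) (hg : 0 < g) (hu : 0 < u) (huv : u < v)
    (h : IsStat a (β*u) (γ*u) d f g pE pES pEP)
    (h' : IsStat a (β*v) (γ*v) d f g pE' pES' pEP') :
    pE < pE' := by
  rw [h.pE_eq_of_proportional ha hβ hγ hd hf hg hu,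
    h'.pE_eq_of_proportional ha hβ hγ hd hf hg (hu.trans huv)]
  exact mul_div_add_mul_lt_mul_div_add_mul (by positivity) (by positivity) (by positivity) hu huv

theorem flux_lt_of_proportional (ha : 0 < a) (hβ : 0 < β) (hγ : 0 < γ) (hd : 0 < d)
    (hf : 0 < f) (hg : 0 < g) (hu : 0 < u) (huv : u < v) (hdrive : β*d*g < a*γ*f)
    (h : IsStat a (β*u) (γ*u) d f g pE pES pEP)
    (h' : IsStat a (β*v) (γ*v) d f g pE' pES' pEP') :
    a * pE - β * u * pES < a * pE' - β * v * pES' := by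
  rw [h.flux_eq_of_proportional ha hβ hγ hd hf hg hu,
    h'.flux_eq_of_proportional ha hβ hγ hd hf hg (hu.trans huv)]
  exact mul_div_add_mul_lt_mul_div_add_mul (by linarith) (by positivity) (by positivity) hu huv

end IsStat

/-- Region II behaviour: for fixed `y`, increasing the substrate binding free
energy within (the closure of) Region II strictly decreases the sequestered
fraction and, when `S·e^Δμ > P`, strictly increases the flux. -/
theorem stmt_7
    (k0 k1 kcat S P dmu dGc : ℝ)
    (hk0 : 0 < k0) (hk1 : 0 < k1) (hkcat : 0 < kcat) (hS : 0 < S) (hP : 0 < P)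
    (pE pES pEP R Psi : ℝ → ℝ → ℝ)
    (hstat : ∀ x y : ℝ,
      IsStat (k0 * S) (k0 * exp x)
        (kcat * min 1 (exp (x - y + dmu + dGc)))
        (kcat * exp dGc * min 1 (exp (y - x - dmu - dGc)))
        (k1 * exp y) (k1 * P)
        (pE x y) (pES x y) (pEP x y))
    (hR : ∀ x y : ℝ, R x y = pES x y + pEP x y)
    (hPsi : ∀ x y : ℝ, Psi x y = k0 * S * pE x y - k0 * exp x * pES x y)
    (y x₁ x₂ : ℝ) (hx : x₁ < x₂) (hreg : x₂ ≤ y - dmu - dGc) :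
    R x₂ y < R x₁ y ∧ (S * exp dmu > P → Psi x₂ y > Psi x₁ y) := by
  have hregion : ∀ x ≤ y - dmu - dGc, IsStat (k0 * S) (k0 * exp x)
      (kcat * exp (dmu + dGc - y) * exp x) (kcat * exp dGc) (k1 * exp y) (k1 * P)
      (pE x y) (pES x y) (pEP x y) := by
    intro x hxy
    have hfwd : min 1 (exp (x - y + dmu + dGc)) = exp (dmu + dGc - y) * exp x := by
      rw [min_eq_right (exp_le_one_iff.mpr (by linarith)), ← exp_add]
      ring_nf
    have hbwd : min 1 (exp (y - x - dmu - dGc)) = 1 :=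
      min_eq_left (one_le_exp (by linarith))
    simpa only [hfwd, hbwd, mul_one, mul_assoc] using hstat x y
  have h₁ := hregion x₁ (hx.le.trans hreg)
  have h₂ := hregion x₂ hreg
  have hexp : exp x₁ < exp x₂ := exp_lt_exp.mpr hx
  constructor
  · have hpE := h₁.pE_lt_of_proportional (by positivity) hk0 (by positivity) (by positivity)
      (by positivity) (by positivity) (exp_pos x₁) hexp h₂
    obtain ⟨-, -, -, hsum₁, -⟩ := h₁
    obtain ⟨-, -, -, hsum₂, -⟩ := h₂
    rw [hR, hR]
    linarith
  · intro hSP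
    have hdrive : k0 * (kcat * exp dGc) * (k1 * P)
        < k0 * S * (kcat * exp (dmu + dGc - y)) * (k1 * exp y) := by
      have hq : exp (dmu + dGc - y) * exp y = exp dmu * exp dGc := by
        rw [← exp_add, ← exp_add]
        ring_nf
      have hscaled := mul_lt_mul_of_pos_left hSP (by positivity : 0 < k0 * kcat * k1 * exp dGc)
      linear_combination hscaled - k0 * S * kcat * k1 * hq
    rw [hPsi, hPsi]
    exact h₁.flux_lt_of_proportional (by positivity) hk0 (by positivity) (by positivity)
      (by positivity) (by positivity) (exp_pos x₁) hexp hdrive h₂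
end

section
/- For every (x,y) ∈ ℝ² and every δ > 0, the sequestered fraction strictly decreases when both binding free energies are increased by δ: R(x + δ, y + δ) < R(x, y). -/
/-!
By the matrix-tree theorem the stationary weight of `E` is the spanning-tree weight
`b d + b f + c f`, while `ES` and `EP` together carry `a d + a f + d g + b g + c g + c a`.
Shifting both binding energies by `δ` multiplies the unbinding rates `b`, `f` by `t = e^δ > 1`
and leaves the other rates unchanged; the weight of `E` then grows by more than the factor `t`
and that of the bound states by less, so the sequestered fraction drops.
-/

open Real Filter

section CycleChain

variable {a b c d f g : ℝ}

def freeWeight (b c d f : ℝ) : ℝ := b * d + b * f + c * f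

def boundWeight (a b c d f g : ℝ) : ℝ := a * d + a * f + d * g + b * g + c * g + c * a

lemma IsStat.sequestered_mul_eq {pE pES pEP : ℝ} (h : IsStat a b c d f g pE pES pEP) :
    (pES + pEP) * (freeWeight b c d f + boundWeight a b c d f g) = boundWeight a b c d f g := by
  obtain ⟨-, -, -, hsum, -, hES, hEP⟩ := h
  have hES' : (b * d + b * f + c * f) * pES = (a * (d + f) + d * g) * pE := by
    linear_combination (d + f) * hES + d * hEP
  have hEP' : (b * d + b * f + c * f) * pEP = (c * a + (b + c) * g) * pE := by
    linear_combination c * hES + (b + c) * hEP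
  unfold freeWeight boundWeight
  linear_combination hES' + hEP' + (a * d + a * f + d * g + b * g + c * g + c * a) * hsum

lemma mul_freeWeight_lt_freeWeight_mul {t : ℝ} (ht : 1 < t) (hb : 0 < b) (hf : 0 < f) :
    t * freeWeight b c d f < freeWeight (b * t) c d (f * t) := by
  have : 0 < t * (t - 1) * (b * f) := by
    have := mul_pos hb hf
    positivity
  unfold freeWeight
  linarith

lemma boundWeight_mul_lt_mul_boundWeight {t : ℝ} (ht : 1 < t)
    (ha : 0 < a) (hc : 0 < c) (hd : 0 < d) (hg : 0 < g) :
    boundWeight a (b * t) c d (f * t) g < t * boundWeight a b c d f g := by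
  have : 0 < (t - 1) * (a * d + d * g + c * g + c * a) := by
    have := sub_pos.mpr ht
    positivity
  unfold boundWeight
  linarith

theorem IsStat.sequestered_lt_of_scale_unbinding {t pE pES pEP qE qES qEP : ℝ} (ht : 1 < t)
    (ha : 0 < a) (hb : 0 < b) (hc : 0 < c) (hd : 0 < d) (hf : 0 < f) (hg : 0 < g)
    (hp : IsStat a b c d f g pE pES pEP) (hq : IsStat a (b * t) c d (f * t) g qE qES qEP) :
    qES + qEP < pES + pEP := by
  have ht0 : 0 < t := one_pos.trans ht
  set D := freeWeight b c d f
  set N := boundWeight a b c d f g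
  set D' := freeWeight (b * t) c d (f * t)
  set N' := boundWeight a (b * t) c d (f * t) g
  have hD : 0 < D := by unfold D freeWeight; positivity
  have hN : 0 < N := by unfold N boundWeight; positivity
  have hN' : 0 < N' := by unfold N' boundWeight; positivity
  have hcross : N' * D < N * D' := calc
    N' * D < t * N * D := by gcongr; exact boundWeight_mul_lt_mul_boundWeight ht ha hc hd hg
    _ = N * (t * D) := by ring
    _ < N * D' := by gcongr; exact mul_freeWeight_lt_freeWeight_mul ht hb hf
  have hD' : 0 < D' := by nlinarith
  rw [eq_div_of_mul_eq (by positivity) hp.sequestered_mul_eq,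
    eq_div_of_mul_eq (by positivity) hq.sequestered_mul_eq,
    div_lt_div_iff₀ (by positivity) (by positivity)]
  nlinarith

end CycleChain

theorem stmt_8_general
    (k0 k1 kcat S P dmu dGc : ℝ)
    (hk0 : 0 < k0) (hk1 : 0 < k1) (hkcat : 0 < kcat) (hS : 0 < S) (hP : 0 < P)
    (pE pES pEP R : ℝ → ℝ → ℝ)
    (hstat : ∀ x y : ℝ,
      IsStat (k0 * S) (k0 * exp x)
        (kcat * min 1 (exp (x - y + dmu + dGc)))
        (kcat * exp dGc * min 1 (exp (y - x - dmu - dGc)))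
        (k1 * exp y) (k1 * P)
        (pE x y) (pES x y) (pEP x y))
    (hR : ∀ x y : ℝ, R x y = pES x y + pEP x y)
    : ∀ x y δ : ℝ, 0 < δ → R (x + δ) (y + δ) < R x y := by
  intro x y δ hδ
  have hshift := hstat (x + δ) (y + δ)
  rw [show x + δ - (y + δ) + dmu + dGc = x - y + dmu + dGc by ring,
    show y + δ - (x + δ) - dmu - dGc = y - x - dmu - dGc by ring,
    exp_add x δ, exp_add y δ, ← mul_assoc, ← mul_assoc] at hshift
  rw [hR, hR]
  exact IsStat.sequestered_lt_of_scale_unbinding (one_lt_exp_iff.mpr hδ) (by positivity)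
    (by positivity) (by positivity) (by positivity) (by positivity) (by positivity)
    (hstat x y) hshift

/-- Increasing both binding free energies by the same `δ > 0` strictly
decreases the sequestered fraction. -/
theorem stmt_8
    (k0 k1 kcat S P dmu dGc : ℝ)
    (hk0 : 0 < k0) (hk1 : 0 < k1) (hkcat : 0 < kcat) (hS : 0 < S) (hP : 0 < P)
    (pE pES pEP R Psi : ℝ → ℝ → ℝ)
    (hstat : ∀ x y : ℝ,
      IsStat (k0 * S) (k0 * exp x)
        (kcat * min 1 (exp (x - y + dmu + dGc)))
        (kcat * exp dGc * min 1 (exp (y - x - dmu - dGc)))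
        (k1 * exp y) (k1 * P)
        (pE x y) (pES x y) (pEP x y))
    (hR : ∀ x y : ℝ, R x y = pES x y + pEP x y)
    (hPsi : ∀ x y : ℝ, Psi x y = k0 * S * pE x y - k0 * exp x * pES x y)
    : ∀ x y δ : ℝ, 0 < δ → R (x + δ) (y + δ) < R x y :=
  stmt_8_general k0 k1 kcat S P dmu dGc hk0 hk1 hkcat hS hP pE pES pEP R hstat hR
end

section
/- (Optimal binding free energies lie on the line.) Suppose S·e^(Δμ) > P and Ψ₀ > 0, and suppose the feasible set F = {(x,y) ∈ ℝ² : Ψ(x,y) ≥ Ψ₀} is nonempty. If (x*, y*) ∈ F minimizes R over F, then y* = x* + Δμ + ΔGc; that is, no point strictly inside Region I or Region II can minimize the sequestered fraction subject to the flux constraint. -/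
/-!
Inside Region I the rates `a, b, c, g` do not depend on `y`, while both exit rates `d, f` of `EP`
are proportional to `e^y`; inside Region II `a, d, f, g` do not depend on `x`, while both exit
rates `b, c` of `ES` are proportional to `e^x`. Multiplying all exit rates of one state by `t > 1`
divides its unnormalised stationary weight by `t`, so after renormalisation `π_E` and the flux
`Ψ = a π_E - b π_ES` are multiplied by one common factor `s > 1`. Moving a point of either region
onto the line `y = x + Δμ + ΔGc` therefore strictly lowers `R = 1 - π_E` and, since
`Ψ ≥ Ψ₀ > 0`, keeps the point feasible.
-/

open Real Filter

namespace IsStat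

variable {a b c d f g pE pES pEP : ℝ}

theorem pos (ha : 0 < a) (hb : 0 < b) (hc : 0 < c) (hd : 0 < d) (hf : 0 < f) (hg : 0 < g)
    (h : IsStat a b c d f g pE pES pEP) : 0 < pE ∧ 0 < pES ∧ 0 < pEP := by
  obtain ⟨hE, hES, hEP, hsum, h1, h2, h3⟩ := h
  refine ⟨hE.lt_of_ne' fun h0 => ?_, hES.lt_of_ne' fun h0 => ?_, hEP.lt_of_ne' fun h0 => ?_⟩ <;>
    subst h0
  · nlinarith [mul_pos hb hf, mul_nonneg hb.le hES, mul_nonneg hf.le hEP]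
  · nlinarith [mul_pos ha hd, mul_nonneg ha.le hE, mul_nonneg hd.le hEP]
  · nlinarith [mul_pos hc hg, mul_nonneg hc.le hES, mul_nonneg hg.le hE]

/-- The coefficients `b*d + b*f + c*f`, `a*d + a*f + g*d`, `a*c + g*b + g*c` below are the
spanning-tree weights of the states `E`, `ES`, `EP` (Markov chain tree theorem). -/
theorem eq_mul_of_balance (ha : 0 < a) (hb : 0 < b) (hc : 0 < c) (hd : 0 < d) (hf : 0 < f)
    (hg : 0 < g) (h : IsStat a b c d f g pE pES pEP) {uE uES uEP : ℝ}
    (h1 : (a + g) * uE = b * uES + f * uEP) (h2 : (b + c) * uES = a * uE + d * uEP)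
    (h3 : (d + f) * uEP = c * uES + g * uE) :
    uE = (uE + uES + uEP) * pE ∧ uES = (uE + uES + uEP) * pES ∧
      uEP = (uE + uES + uEP) * pEP := by
  obtain ⟨-, -, -, hsum, e1, e2, e3⟩ := h
  have hwE : 0 < b*d + b*f + c*f := by positivity
  have hZ : 0 < (b*d + b*f + c*f) + (a*d + a*f + g*d) + (a*c + g*b + g*c) := by positivity
  have hpES : pES * (b*d + b*f + c*f) = pE * (a*d + a*f + g*d) := by
    linear_combination f * e2 - d * e1
  have hpEP : pEP * (b*d + b*f + c*f) = pE * (a*c + g*b + g*c) := by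
    linear_combination b * e3 - c * e1
  have huES : uES * (b*d + b*f + c*f) = uE * (a*d + a*f + g*d) := by
    linear_combination f * h2 - d * h1
  have huEP : uEP * (b*d + b*f + c*f) = uE * (a*c + g*b + g*c) := by
    linear_combination b * h3 - c * h1
  have hE : uE = (uE + uES + uEP) * pE := by
    refine mul_right_cancel₀ hZ.ne' ?_
    linear_combination (-huES - huEP) + (uE + uES + uEP) * (hpES + hpEP)
      - (uE + uES + uEP) * (b*d + b*f + c*f) * hsum
  refine ⟨hE, mul_right_cancel₀ hwE.ne' ?_, mul_right_cancel₀ hwE.ne' ?_⟩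
  · linear_combination huES - (uE + uES + uEP) * hpES + (a*d + a*f + g*d) * hE
  · linear_combination huEP - (uE + uES + uEP) * hpEP + (a*c + g*b + g*c) * hE

theorem exists_one_lt_mul_of_scale_ES {t qE qES qEP : ℝ} (ha : 0 < a) (hb : 0 < b)
    (hc : 0 < c) (hd : 0 < d) (hf : 0 < f) (hg : 0 < g) (ht : 1 < t)
    (hp : IsStat a b c d f g pE pES pEP) (hq : IsStat a (t * b) (t * c) d f g qE qES qEP) :
    ∃ s > 1, qE = s * pE ∧ a * qE - t * b * qES = s * (a * pE - b * pES) := by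
  have hqES := (hq.pos ha (by positivity) (by positivity) hd hf hg).2.1
  obtain ⟨-, -, -, hsum, h1, h2, h3⟩ := hq
  obtain ⟨hE, hES, -⟩ := hp.eq_mul_of_balance ha hb hc hd hf hg (uE := qE) (uES := t * qES)
    (uEP := qEP) (by linear_combination h1) (by linear_combination h2) (by linear_combination h3)
  -- `qE + t * qES + qEP = 1 + (t - 1) * qES` since `q` is normalised
  refine ⟨qE + t * qES + qEP, by nlinarith, hE, ?_⟩
  linear_combination a * hE - b * hES

theorem exists_one_lt_mul_of_scale_EP {t qE qES qEP : ℝ} (ha : 0 < a) (hb : 0 < b)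
    (hc : 0 < c) (hd : 0 < d) (hf : 0 < f) (hg : 0 < g) (ht : 1 < t)
    (hp : IsStat a b c d f g pE pES pEP) (hq : IsStat a b c (t * d) (t * f) g qE qES qEP) :
    ∃ s > 1, qE = s * pE ∧ a * qE - b * qES = s * (a * pE - b * pES) := by
  have hqEP := (hq.pos ha hb hc (by positivity) (by positivity) hg).2.2
  obtain ⟨-, -, -, hsum, h1, h2, h3⟩ := hq
  obtain ⟨hE, hES, -⟩ := hp.eq_mul_of_balance ha hb hc hd hf hg (uE := qE) (uES := qES)
    (uEP := t * qEP) (by linear_combination h1) (by linear_combination h2)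
    (by linear_combination h3)
  refine ⟨qE + qES + t * qEP, by nlinarith, hE, ?_⟩
  linear_combination a * hE - b * hES

end IsStat

def IsEnzymeStationary (k0 k1 kcat S P dmu dGc x y pE pES pEP : ℝ) : Prop :=
  IsStat (k0 * S) (k0 * exp x) (kcat * min 1 (exp (x - y + dmu + dGc)))
    (kcat * exp dGc * min 1 (exp (y - x - dmu - dGc))) (k1 * exp y) (k1 * P) pE pES pEP

theorem min_one_exp_of_le_of_nonpos {z w : ℝ} (hzw : z ≤ w) (hw : w ≤ 0) :
    min 1 (exp w) = exp (w - z) * min 1 (exp z) := by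
  rw [min_eq_right (exp_le_one_iff.2 hw), min_eq_right (exp_le_one_iff.2 (hzw.trans hw)),
    ← exp_add, sub_add_cancel]

namespace IsEnzymeStationary

variable {k0 k1 kcat S P dmu dGc x y pE pES pEP qE qES qEP : ℝ}

theorem pos (hk0 : 0 < k0) (hk1 : 0 < k1) (hkcat : 0 < kcat) (hS : 0 < S) (hP : 0 < P)
    (h : IsEnzymeStationary k0 k1 kcat S P dmu dGc x y pE pES pEP) :
    0 < pE ∧ 0 < pES ∧ 0 < pEP :=
  IsStat.pos (by positivity) (by positivity) (by positivity) (by positivity) (by positivity)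
    (by positivity) h

theorem exists_one_lt_mul_of_regionI (hk0 : 0 < k0) (hk1 : 0 < k1) (hkcat : 0 < kcat)
    (hS : 0 < S) (hP : 0 < P) (hy : y < x + dmu + dGc)
    (hp : IsEnzymeStationary k0 k1 kcat S P dmu dGc x y pE pES pEP)
    (hq : IsEnzymeStationary k0 k1 kcat S P dmu dGc x (x + dmu + dGc) qE qES qEP) :
    ∃ s > 1, qE = s * pE ∧
      k0 * S * qE - k0 * exp x * qES = s * (k0 * S * pE - k0 * exp x * pES) := by
  have ht : 1 < exp (x + dmu + dGc - y) := one_lt_exp_iff.2 (by linarith)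
  have hc : min 1 (exp (x - (x + dmu + dGc) + dmu + dGc)) = min 1 (exp (x - y + dmu + dGc)) := by
    rw [min_eq_left (one_le_exp (by linarith)), min_eq_left (one_le_exp (by linarith))]
  have hd : kcat * exp dGc * min 1 (exp (x + dmu + dGc - x - dmu - dGc))
      = exp (x + dmu + dGc - y) * (kcat * exp dGc * min 1 (exp (y - x - dmu - dGc))) := by
    rw [min_one_exp_of_le_of_nonpos (z := y - x - dmu - dGc) (by linarith) (by linarith)]
    ring_nf
  have hf : k1 * exp (x + dmu + dGc) = exp (x + dmu + dGc - y) * (k1 * exp y) := by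
    rw [mul_left_comm, ← exp_add, sub_add_cancel]
  unfold IsEnzymeStationary at hp hq
  rw [hc, hd, hf] at hq
  exact hp.exists_one_lt_mul_of_scale_EP (by positivity) (by positivity) (by positivity)
    (by positivity) (by positivity) (by positivity) ht hq

theorem exists_one_lt_mul_of_regionII (hk0 : 0 < k0) (hk1 : 0 < k1) (hkcat : 0 < kcat)
    (hS : 0 < S) (hP : 0 < P) (hx : x < y - dmu - dGc)
    (hp : IsEnzymeStationary k0 k1 kcat S P dmu dGc x y pE pES pEP)
    (hq : IsEnzymeStationary k0 k1 kcat S P dmu dGc (y - dmu - dGc) y qE qES qEP) :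
    ∃ s > 1, qE = s * pE ∧
      k0 * S * qE - k0 * exp (y - dmu - dGc) * qES = s * (k0 * S * pE - k0 * exp x * pES) := by
  have ht : 1 < exp (y - dmu - dGc - x) := one_lt_exp_iff.2 (by linarith)
  have hb : k0 * exp (y - dmu - dGc) = exp (y - dmu - dGc - x) * (k0 * exp x) := by
    rw [mul_left_comm, ← exp_add, sub_add_cancel]
  have hc : kcat * min 1 (exp (y - dmu - dGc - y + dmu + dGc))
      = exp (y - dmu - dGc - x) * (kcat * min 1 (exp (x - y + dmu + dGc))) := by
    rw [min_one_exp_of_le_of_nonpos (z := x - y + dmu + dGc) (by linarith) (by linarith)]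
    ring_nf
  have hd : min 1 (exp (y - (y - dmu - dGc) - dmu - dGc)) = min 1 (exp (y - x - dmu - dGc)) := by
    rw [min_eq_left (one_le_exp (by linarith)), min_eq_left (one_le_exp (by linarith))]
  unfold IsEnzymeStationary at hp hq
  rw [hb, hc, hd] at hq
  rw [hb]
  exact hp.exists_one_lt_mul_of_scale_ES (by positivity) (by positivity) (by positivity)
    (by positivity) (by positivity) (by positivity) ht hq

end IsEnzymeStationary

theorem stmt_9_general
    (k0 k1 kcat S P dmu dGc : ℝ)
    (hk0 : 0 < k0) (hk1 : 0 < k1) (hkcat : 0 < kcat) (hS : 0 < S) (hP : 0 < P)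
    (pE pES pEP R Psi : ℝ → ℝ → ℝ)
    (hstat : ∀ x y : ℝ,
      IsStat (k0 * S) (k0 * exp x)
        (kcat * min 1 (exp (x - y + dmu + dGc)))
        (kcat * exp dGc * min 1 (exp (y - x - dmu - dGc)))
        (k1 * exp y) (k1 * P)
        (pE x y) (pES x y) (pEP x y))
    (hR : ∀ x y : ℝ, R x y = pES x y + pEP x y)
    (hPsi : ∀ x y : ℝ, Psi x y = k0 * S * pE x y - k0 * exp x * pES x y)
    (Psi0 : ℝ) (hPsi0 : 0 < Psi0)
    (xs ys : ℝ)
    (hfeas : Psi0 ≤ Psi xs ys)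
    (hmin : ∀ x y : ℝ, Psi0 ≤ Psi x y → R xs ys ≤ R x y) :
    ys = xs + dmu + dGc := by
  have hstat' (x y : ℝ) : IsEnzymeStationary k0 k1 kcat S P dmu dGc x y
      (pE x y) (pES x y) (pEP x y) := hstat x y
  have hpE : 0 < pE xs ys := ((hstat' xs ys).pos hk0 hk1 hkcat hS hP).1
  have not_better (x y s : ℝ) (hs : 1 < s) (hE : pE x y = s * pE xs ys)
      (hflux : Psi x y = s * Psi xs ys) : False := by
    have hR' (x y : ℝ) : R x y = 1 - pE x y := by
      rw [hR]; linarith [(hstat x y).2.2.2.1]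
    have hfeas' : Psi0 ≤ Psi x y := by rw [hflux]; nlinarith
    have hRlt : R x y < R xs ys := by rw [hR', hR', hE]; nlinarith
    exact (hmin x y hfeas').not_gt hRlt
  by_contra hys
  rcases lt_or_gt_of_ne hys with hI | hII
  · obtain ⟨s, hs, hE, hflux⟩ :=
      (hstat' xs ys).exists_one_lt_mul_of_regionI hk0 hk1 hkcat hS hP hI (hstat' xs _)
    exact not_better xs _ s hs hE (by rw [hPsi, hPsi, hflux])
  · obtain ⟨s, hs, hE, hflux⟩ :=
      (hstat' xs ys).exists_one_lt_mul_of_regionII hk0 hk1 hkcat hS hP (by linarith) (hstat' _ ys)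
    exact not_better _ ys s hs hE (by rw [hPsi, hPsi, hflux])

/-- Optimal binding free energies lie on the line
`ΔG_EP = ΔG_ES + Δμ + ΔGc`: any minimizer of the sequestered fraction over the
nonempty feasible set `{Ψ ≥ Ψ₀}` satisfies `y* = x* + Δμ + ΔGc`. -/
theorem stmt_9
    (k0 k1 kcat S P dmu dGc : ℝ)
    (hk0 : 0 < k0) (hk1 : 0 < k1) (hkcat : 0 < kcat) (hS : 0 < S) (hP : 0 < P)
    (pE pES pEP R Psi : ℝ → ℝ → ℝ)
    (hstat : ∀ x y : ℝ,
      IsStat (k0 * S) (k0 * exp x)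
        (kcat * min 1 (exp (x - y + dmu + dGc)))
        (kcat * exp dGc * min 1 (exp (y - x - dmu - dGc)))
        (k1 * exp y) (k1 * P)
        (pE x y) (pES x y) (pEP x y))
    (hR : ∀ x y : ℝ, R x y = pES x y + pEP x y)
    (hPsi : ∀ x y : ℝ, Psi x y = k0 * S * pE x y - k0 * exp x * pES x y)
    (hdrive : S * exp dmu > P)
    (Psi0 : ℝ) (hPsi0 : 0 < Psi0)
    (hne : ∃ q : ℝ × ℝ, Psi0 ≤ Psi q.1 q.2)
    (xs ys : ℝ)
    (hfeas : Psi0 ≤ Psi xs ys)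
    (hmin : ∀ x y : ℝ, Psi0 ≤ Psi x y → R xs ys ≤ R x y) :
    ys = xs + dmu + dGc :=
  stmt_9_general k0 k1 kcat S P dmu dGc hk0 hk1 hkcat hS hP pE pES pEP R Psi hstat hR hPsi Psi0
    hPsi0 xs ys hfeas hmin
end

section
/- (The flux constraint is saturated.) Suppose Ψ₀ > 0 and the feasible set F = {(x,y) ∈ ℝ² : Ψ(x,y) ≥ Ψ₀} is nonempty. If (x*, y*) ∈ F minimizes R over F, then Ψ(x*, y*) = Ψ₀. -/
/-!
If the flux were strictly above `Ψ₀` at the minimiser, one could move along the diagonal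
`(x* + t, y* + t)`. There the catalytic rates `c, d` are unchanged while the unbinding rates
`b, f` are both multiplied by `u = eᵗ`, so the King–Altman formula makes `Ψ` and `R` explicit
rational functions of `u`. The flux is continuous in `u`, so it stays above `Ψ₀` for small
`t > 0`, whereas `R` is strictly decreasing in `u`; this contradicts minimality.
-/

open Real Filter

open Topology

/-- The summands are the spanning-tree weights of `E`, `ES` and `EP` (King–Altman). -/
def treeWeightSum (a b c d f g : ℝ) : ℝ :=
  (b*d + b*f + c*f) + (a*d + a*f + d*g) + (a*c + b*g + c*g)

theorem treeWeightSum_pos {a b c d f g : ℝ} (ha : 0 < a) (hb : 0 < b) (hc : 0 < c)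
    (hd : 0 < d) (hf : 0 < f) (hg : 0 < g) : 0 < treeWeightSum a b c d f g := by
  unfold treeWeightSum; positivity

namespace IsStat

variable {a b c d f g pE pES pEP : ℝ}

theorem mul_treeWeightSum (h : IsStat a b c d f g pE pES pEP) (hE : b*d + b*f + c*f ≠ 0) :
    pE * treeWeightSum a b c d f g = b*d + b*f + c*f ∧
    pES * treeWeightSum a b c d f g = a*d + a*f + d*g ∧
    pEP * treeWeightSum a b c d f g = a*c + b*g + c*g := by
  obtain ⟨-, -, -, hsum, -, hES, hEP⟩ := h
  have rES : pES * (b*d + b*f + c*f) = (a*d + a*f + d*g) * pE := by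
    linear_combination (d + f) * hES + d * hEP
  have rEP : pEP * (b*d + b*f + c*f) = (a*c + b*g + c*g) * pE := by
    linear_combination (b + c) * hEP + c * hES
  have hpE : pE * treeWeightSum a b c d f g = b*d + b*f + c*f := by
    unfold treeWeightSum; linear_combination (b*d + b*f + c*f) * hsum - rES - rEP
  refine ⟨hpE, mul_right_cancel₀ hE ?_, mul_right_cancel₀ hE ?_⟩
  · linear_combination treeWeightSum a b c d f g * rES + (a*d + a*f + d*g) * hpE
  · linear_combination treeWeightSum a b c d f g * rEP + (a*c + b*g + c*g) * hpE

variable (ha : 0 < a) (hb : 0 < b) (hc : 0 < c) (hd : 0 < d) (hf : 0 < f) (hg : 0 < g)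
include ha hb hc hd hf hg

theorem flux_eq_div (h : IsStat a b c d f g pE pES pEP) :
    a * pE - b * pES = (a*c*f - b*d*g) / treeWeightSum a b c d f g := by
  obtain ⟨hpE, hpES, -⟩ := h.mul_treeWeightSum (by positivity)
  rw [eq_div_iff (treeWeightSum_pos ha hb hc hd hf hg).ne']
  linear_combination a * hpE - b * hpES

theorem sequestered_eq_div (h : IsStat a b c d f g pE pES pEP) :
    pES + pEP = (a*d + a*f + d*g + (a*c + b*g + c*g)) / treeWeightSum a b c d f g := by
  obtain ⟨-, hpES, hpEP⟩ := h.mul_treeWeightSum (by positivity)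
  rw [eq_div_iff (treeWeightSum_pos ha hb hc hd hf hg).ne']
  linear_combination hpES + hpEP

end IsStat

section Scaling

variable {a b c d f g : ℝ} (ha : 0 < a) (hb : 0 < b) (hc : 0 < c) (hd : 0 < d) (hf : 0 < f)
  (hg : 0 < g)
include ha hb hc hd hf hg

theorem continuousOn_flux_scaling :
    ContinuousOn (fun u => (a*c*(f*u) - b*u*d*g) / treeWeightSum a (b*u) c d (f*u) g)
      (Set.Ioi 0) := by
  refine ContinuousOn.div (by fun_prop) (by unfold treeWeightSum; fun_prop) fun u hu => ?_
  exact (treeWeightSum_pos ha (mul_pos hb hu) hc hd (mul_pos hf hu) hg).ne'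

theorem strictAntiOn_sequestered_scaling :
    StrictAntiOn
      (fun u => (a*d + a*(f*u) + d*g + (a*c + b*u*g + c*g)) / treeWeightSum a (b*u) c d (f*u) g)
      (Set.Ioi 0) := by
  intro u hu v hv huv
  simp only [Set.mem_Ioi] at hu hv
  rw [div_lt_div_iff₀ (treeWeightSum_pos ha (mul_pos hb hv) hc hd (mul_pos hf hv) hg)
    (treeWeightSum_pos ha (mul_pos hb hu) hc hd (mul_pos hf hu) hg)]
  unfold treeWeightSum
  set α := a*f + b*g
  set D := a*d + d*g + a*c + c*g
  -- this product is the right-hand side minus the left-hand side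
  have hgap : 0 < (v - u) * (α * (b*f) * u * v + D * (b*f) * (u + v) + D * (b*d + c*f)) :=
    mul_pos (sub_pos.2 huv) (by positivity)
  linarith

theorem IsStat.exists_flux_gt_sequestered_lt {Ψ₀ : ℝ} {pE pES pEP : ℝ → ℝ}
    (h : ∀ t, IsStat a (b * exp t) c d (f * exp t) g (pE t) (pES t) (pEP t))
    (hΨ₀ : Ψ₀ < a * pE 0 - b * pES 0) :
    ∃ t, Ψ₀ < a * pE t - b * exp t * pES t ∧ pES t + pEP t < pES 0 + pEP 0 := by
  have hflux : ∀ t, a * pE t - b * exp t * pES t = (a*c*(f * exp t) - b * exp t * d * g)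
      / treeWeightSum a (b * exp t) c d (f * exp t) g := fun t =>
    (h t).flux_eq_div ha (by positivity) hc hd (by positivity) hg
  have hseq : ∀ t, pES t + pEP t = (a*d + a*(f * exp t) + d*g + (a*c + b * exp t * g + c*g))
      / treeWeightSum a (b * exp t) c d (f * exp t) g := fun t =>
    (h t).sequestered_eq_div ha (by positivity) hc hd (by positivity) hg
  have hcont : ContinuousAt (fun t => a * pE t - b * exp t * pES t) 0 := by
    rw [funext hflux]
    exact ((continuousOn_flux_scaling ha hb hc hd hf hg).continuousAt
      (Ioi_mem_nhds (exp_pos 0))).comp continuous_exp.continuousAt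
  have hnear : ∀ᶠ t in 𝓝[>] 0, Ψ₀ < a * pE t - b * exp t * pES t :=
    (hcont.eventually (lt_mem_nhds (by simpa using hΨ₀))).filter_mono nhdsWithin_le_nhds
  obtain ⟨t, hΨt, ht⟩ := (hnear.and self_mem_nhdsWithin).exists
  refine ⟨t, hΨt, ?_⟩
  have hseq0 := hseq 0
  rw [exp_zero] at hseq0
  rw [hseq t, hseq0]
  exact strictAntiOn_sequestered_scaling ha hb hc hd hf hg (Set.mem_Ioi.2 one_pos)
    (Set.mem_Ioi.2 (exp_pos t)) (one_lt_exp_iff.2 ht)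

end Scaling

theorem stmt_10_general
    (k0 k1 kcat S P dmu dGc : ℝ)
    (hk0 : 0 < k0) (hk1 : 0 < k1) (hkcat : 0 < kcat) (hS : 0 < S) (hP : 0 < P)
    (pE pES pEP R Psi : ℝ → ℝ → ℝ)
    (hstat : ∀ x y : ℝ,
      IsStat (k0 * S) (k0 * exp x)
        (kcat * min 1 (exp (x - y + dmu + dGc)))
        (kcat * exp dGc * min 1 (exp (y - x - dmu - dGc)))
        (k1 * exp y) (k1 * P)
        (pE x y) (pES x y) (pEP x y))
    (hR : ∀ x y : ℝ, R x y = pES x y + pEP x y)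
    (hPsi : ∀ x y : ℝ, Psi x y = k0 * S * pE x y - k0 * exp x * pES x y)
    (Psi0 : ℝ)
    (xs ys : ℝ)
    (hfeas : Psi0 ≤ Psi xs ys)
    (hmin : ∀ x y : ℝ, Psi0 ≤ Psi x y → R xs ys ≤ R x y) :
    Psi xs ys = Psi0 := by
  set c := kcat * min 1 (exp (xs - ys + dmu + dGc))
  set d := kcat * exp dGc * min 1 (exp (ys - xs - dmu - dGc))
  have hc : 0 < c := mul_pos hkcat (lt_min one_pos (exp_pos _))
  have hd : 0 < d := by have := lt_min one_pos (exp_pos (ys - xs - dmu - dGc)); positivity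
  have hray : ∀ t, IsStat (k0 * S) (k0 * exp xs * exp t) c d (k1 * exp ys * exp t) (k1 * P)
      (pE (xs + t) (ys + t)) (pES (xs + t) (ys + t)) (pEP (xs + t) (ys + t)) := by
    intro t
    have h := hstat (xs + t) (ys + t)
    rwa [show xs + t - (ys + t) = xs - ys by ring, show ys + t - (xs + t) = ys - xs by ring,
      exp_add xs, exp_add ys, ← mul_assoc, ← mul_assoc] at h
  refine le_antisymm (not_lt.1 fun hlt => ?_) hfeas
  obtain ⟨t, hΨt, hRt⟩ := IsStat.exists_flux_gt_sequestered_lt (by positivity) (by positivity)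
    hc hd (by positivity) (by positivity) hray (by simpa [hPsi] using hlt)
  have hmin_t := hmin (xs + t) (ys + t) (by rw [hPsi, exp_add xs, ← mul_assoc]; exact hΨt.le)
  simp only [hR, add_zero] at hmin_t hRt
  exact hRt.not_ge hmin_t

/-- The flux constraint is saturated: any minimizer of the sequestered fraction
over the nonempty feasible set `{Ψ ≥ Ψ₀}` satisfies `Ψ(x*,y*) = Ψ₀`. -/
theorem stmt_10
    (k0 k1 kcat S P dmu dGc : ℝ)
    (hk0 : 0 < k0) (hk1 : 0 < k1) (hkcat : 0 < kcat) (hS : 0 < S) (hP : 0 < P)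
    (pE pES pEP R Psi : ℝ → ℝ → ℝ)
    (hstat : ∀ x y : ℝ,
      IsStat (k0 * S) (k0 * exp x)
        (kcat * min 1 (exp (x - y + dmu + dGc)))
        (kcat * exp dGc * min 1 (exp (y - x - dmu - dGc)))
        (k1 * exp y) (k1 * P)
        (pE x y) (pES x y) (pEP x y))
    (hR : ∀ x y : ℝ, R x y = pES x y + pEP x y)
    (hPsi : ∀ x y : ℝ, Psi x y = k0 * S * pE x y - k0 * exp x * pES x y)
    (Psi0 : ℝ) (hPsi0 : 0 < Psi0)
    (hne : ∃ q : ℝ × ℝ, Psi0 ≤ Psi q.1 q.2)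
    (xs ys : ℝ)
    (hfeas : Psi0 ≤ Psi xs ys)
    (hmin : ∀ x y : ℝ, Psi0 ≤ Psi x y → R xs ys ≤ R x y) :
    Psi xs ys = Psi0 :=
  stmt_10_general k0 k1 kcat S P dmu dGc hk0 hk1 hkcat hS hP pE pES pEP R Psi hstat hR hPsi Psi0 xs
    ys hfeas hmin
end

section
/- (Closed-form flux in Region II.) For every (x,y) with y ≥ x + Δμ + ΔGc, the flux satisfies Ψ(x,y) = (1 − R(x,y))·k0·k1·kcat·(S·e^(Δμ) − P)/(k0·kcat + k0·k1·e^(y−ΔGc) + k1·kcat·e^(Δμ)). In particular, in Region II the ratio Ψ(x,y)/(1 − R(x,y)) does not depend on x. -/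
/-!
By the Hill–King–Altman diagram method, the stationary flux of a three-state cycle is
`J = π_E · (a c f − b d g) / (b d + b f + c f)`: the numerator is the net cycle weight and the
denominator the total weight of the spanning trees rooted at `E`. In Region II the `min`s
resolve to `c = kcat·e^(x−y+Δμ+ΔGc)` and `d = kcat·e^ΔGc`, so numerator and denominator share
the factor `e^(x+ΔGc)`, which cancels and leaves an expression free of `x`. Finally
`1 − R = π_E > 0`.
-/

open Real Filter

namespace IsStat

variable {a b c d f g pE pES pEP : ℝ}

theorem flux_mul_treeWeight_eq (h : IsStat a b c d f g pE pES pEP) :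
    (a * pE - b * pES) * (b * d + b * f + c * f) = pE * (a * c * f - b * d * g) := by
  obtain ⟨-, -, -, -, hE, hES, -⟩ := h
  linear_combination b * d * hE - b * f * hES

theorem pE_pos (h : IsStat a b c d f g pE pES pEP) (hb : 0 < b) (hf : 0 < f) : 0 < pE := by
  obtain ⟨hE, hES, hEP, hsum, hbalE, -, -⟩ := h
  refine hE.lt_of_ne fun hE0 => ?_
  have hout : b * pES + f * pEP = 0 := by rw [← hbalE, ← hE0, mul_zero]
  have hES0 : pES = 0 := by nlinarith
  have hEP0 : pEP = 0 := by nlinarith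
  rw [← hE0, hES0, hEP0] at hsum
  norm_num at hsum

end IsStat

theorem flux_eq_of_regionII {k0 k1 kcat S P dmu dGc x y pE pES pEP : ℝ}
    (hk0 : 0 < k0) (hk1 : 0 < k1) (hkcat : 0 < kcat) (hxy : x + dmu + dGc ≤ y)
    (h : IsStat (k0 * S) (k0 * exp x)
      (kcat * min 1 (exp (x - y + dmu + dGc)))
      (kcat * exp dGc * min 1 (exp (y - x - dmu - dGc)))
      (k1 * exp y) (k1 * P) pE pES pEP) :
    k0 * S * pE - k0 * exp x * pES = pE *
      (k0 * k1 * kcat * (S * exp dmu - P) /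
        (k0 * kcat + k0 * k1 * exp (y - dGc) + k1 * kcat * exp dmu)) := by
  have hc : min 1 (exp (x - y + dmu + dGc)) = exp (x - y + dmu + dGc) :=
    min_eq_right (exp_le_one_iff.mpr (by linarith))
  have hd : min 1 (exp (y - x - dmu - dGc)) = 1 := min_eq_left (one_le_exp (by linarith))
  rw [hc, hd, mul_one] at h
  have hw := h.flux_mul_treeWeight_eq
  have htree : k0 * exp x * (kcat * exp dGc) + k0 * exp x * (k1 * exp y) +
      kcat * exp (x - y + dmu + dGc) * (k1 * exp y) =
      exp (x + dGc) * (k0 * kcat + k0 * k1 * exp (y - dGc) + k1 * kcat * exp dmu) := by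
    simp only [exp_add, exp_sub]
    field_simp
  have hcycle : k0 * S * (kcat * exp (x - y + dmu + dGc)) * (k1 * exp y) -
      k0 * exp x * (kcat * exp dGc) * (k1 * P) =
      exp (x + dGc) * (k0 * k1 * kcat * (S * exp dmu - P)) := by
    simp only [exp_add, exp_sub]
    field_simp
  rw [htree, hcycle] at hw
  have hden : 0 < k0 * kcat + k0 * k1 * exp (y - dGc) + k1 * kcat * exp dmu := by positivity
  rw [mul_div_assoc', eq_div_iff hden.ne']
  refine mul_left_cancel₀ (exp_pos (x + dGc)).ne' ?_
  linear_combination hw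

theorem stmt_13_general
    (k0 k1 kcat S P dmu dGc : ℝ)
    (hk0 : 0 < k0) (hk1 : 0 < k1) (hkcat : 0 < kcat)
    (pE pES pEP R Psi : ℝ → ℝ → ℝ)
    (hstat : ∀ x y : ℝ,
      IsStat (k0 * S) (k0 * exp x)
        (kcat * min 1 (exp (x - y + dmu + dGc)))
        (kcat * exp dGc * min 1 (exp (y - x - dmu - dGc)))
        (k1 * exp y) (k1 * P)
        (pE x y) (pES x y) (pEP x y))
    (hR : ∀ x y : ℝ, R x y = pES x y + pEP x y)
    (hPsi : ∀ x y : ℝ, Psi x y = k0 * S * pE x y - k0 * exp x * pES x y)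
    : (∀ x y : ℝ, y ≥ x + dmu + dGc →
        Psi x y = (1 - R x y) *
          (k0 * k1 * kcat * (S * exp dmu - P) /
            (k0 * kcat + k0 * k1 * exp (y - dGc) + k1 * kcat * exp dmu))) ∧
      (∀ y x₁ x₂ : ℝ, y ≥ x₁ + dmu + dGc → y ≥ x₂ + dmu + dGc →
        Psi x₁ y / (1 - R x₁ y) = Psi x₂ y / (1 - R x₂ y)) := by
  have hone_sub_R : ∀ x y, 1 - R x y = pE x y := fun x y => by
    rw [hR]
    linarith [(hstat x y).2.2.2.1]
  have hflux : ∀ x y : ℝ, y ≥ x + dmu + dGc → Psi x y = (1 - R x y) *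
      (k0 * k1 * kcat * (S * exp dmu - P) /
        (k0 * kcat + k0 * k1 * exp (y - dGc) + k1 * kcat * exp dmu)) := fun x y hxy => by
    rw [hPsi, hone_sub_R]
    exact flux_eq_of_regionII hk0 hk1 hkcat hxy (hstat x y)
  refine ⟨hflux, fun y x₁ x₂ h₁ h₂ => ?_⟩
  have hpE_ne : ∀ x, 1 - R x y ≠ 0 := fun x => by
    rw [hone_sub_R]
    exact ((hstat x y).pE_pos (by positivity) (by positivity)).ne'
  rw [hflux x₁ y h₁, hflux x₂ y h₂, mul_div_cancel_left₀ _ (hpE_ne x₁),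
    mul_div_cancel_left₀ _ (hpE_ne x₂)]

/-- Closed-form flux in Region II: for `y ≥ x + Δμ + ΔGc`,
`Ψ = (1 − R)·k0·k1·kcat·(S·e^Δμ − P)/(k0·kcat + k0·k1·e^(y−ΔGc) + k1·kcat·e^Δμ)`;
in particular `Ψ/(1 − R)` does not depend on `x` in Region II. -/
theorem stmt_13
    (k0 k1 kcat S P dmu dGc : ℝ)
    (hk0 : 0 < k0) (hk1 : 0 < k1) (hkcat : 0 < kcat) (hS : 0 < S) (hP : 0 < P)
    (pE pES pEP R Psi : ℝ → ℝ → ℝ)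
    (hstat : ∀ x y : ℝ,
      IsStat (k0 * S) (k0 * exp x)
        (kcat * min 1 (exp (x - y + dmu + dGc)))
        (kcat * exp dGc * min 1 (exp (y - x - dmu - dGc)))
        (k1 * exp y) (k1 * P)
        (pE x y) (pES x y) (pEP x y))
    (hR : ∀ x y : ℝ, R x y = pES x y + pEP x y)
    (hPsi : ∀ x y : ℝ, Psi x y = k0 * S * pE x y - k0 * exp x * pES x y)
    : (∀ x y : ℝ, y ≥ x + dmu + dGc →
        Psi x y = (1 - R x y) *
          (k0 * k1 * kcat * (S * exp dmu - P) /
            (k0 * kcat + k0 * k1 * exp (y - dGc) + k1 * kcat * exp dmu))) ∧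
      (∀ y x₁ x₂ : ℝ, y ≥ x₁ + dmu + dGc → y ≥ x₂ + dmu + dGc →
        Psi x₁ y / (1 - R x₁ y) = Psi x₂ y / (1 - R x₂ y)) :=
  stmt_13_general k0 k1 kcat S P dmu dGc hk0 hk1 hkcat pE pES pEP R Psi hstat hR hPsi
end

section
/- (Regions I and VI behaviour, non-diffusion model.) Fix x ∈ ℝ and let y₁ < y₂ satisfy y₂ ≤ E2 and y₂ ≤ x + Δμ + ΔGc (so product binding is diffusion-limited and the catalytic step is backwards labile at both points). Then R(x, y₂) < R(x, y₁); if moreover S·e^(Δμ) > P, then Ψ(x, y₂) > Ψ(x, y₁). -/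
open Real

lemma strictMonoOn_div_mul_add {α C : ℝ} (hα : 0 ≤ α) (hC : 0 < C) :
    StrictMonoOn (fun t => t / (α * t + C)) (Set.Ici 0) := by
  intro s (hs : 0 ≤ s) t (ht : 0 ≤ t) hst
  rw [div_lt_div_iff₀ (by positivity) (by positivity)]
  nlinarith

lemma exp_mul_min_one_exp (u v : ℝ) : exp u * min 1 (exp (v - u)) = min (exp u) (exp v) := by
  rw [mul_min_of_nonneg _ _ (exp_pos u).le, mul_one, ← exp_add, add_sub_cancel]

lemma binding_rates_balance (k0 S E1 x : ℝ) :
    k0 * S * min 1 (exp (-(x - E1))) * exp x = k0 * exp E1 * min 1 (exp (x - E1)) * S := by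
  calc k0 * S * min 1 (exp (-(x - E1))) * exp x
      = k0 * S * (exp x * min 1 (exp (E1 - x))) := by rw [neg_sub]; ring
    _ = k0 * S * (exp E1 * min 1 (exp (x - E1))) := by
      rw [exp_mul_min_one_exp, exp_mul_min_one_exp, min_comm]
    _ = k0 * exp E1 * min 1 (exp (x - E1)) * S := by ring

lemma flux_prefactor_eq (k0 k1 kcat S P dmu E1 x : ℝ) :
    k0 * S * min 1 (exp (-(x - E1))) * kcat * k1 -
        k0 * exp E1 * min 1 (exp (x - E1)) * (kcat * exp (-x - dmu)) * (k1 * P) =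
      kcat * k1 * (k0 * exp E1 * min 1 (exp (x - E1))) * exp (-x - dmu) *
        (S * exp dmu - P) := by
  have hab := binding_rates_balance k0 S E1 x
  have he : exp (-x - dmu) * exp dmu = exp (-x) := by rw [← exp_add]; ring_nf
  have hinv : exp x * exp (-x) = 1 := by rw [← exp_add, add_neg_cancel, exp_zero]
  linear_combination kcat * k1 * (-(k0 * exp E1 * min 1 (exp (x - E1)) * S) * he +
    exp (-x) * hab - k0 * S * min 1 (exp (-(x - E1))) * hinv)

namespace IsStat

variable {a b c d f g pE pES pEP : ℝ}

lemma mul_pE_eq (h : IsStat a b c d f g pE pES pEP) :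
    (b*d + b*f + c*f + (a*d + a*f + d*g) + (a*c + c*g + b*g)) * pE = b*d + b*f + c*f := by
  obtain ⟨-, -, -, hsum, -, h2, h3⟩ := h
  linear_combination (b*d + b*f + c*f) * hsum - (d + f) * h2 - d * h3 - (b + c) * h3 - c * h2

lemma mul_pES_eq (h : IsStat a b c d f g pE pES pEP) :
    (b*d + b*f + c*f) * pES = (a*d + a*f + d*g) * pE := by
  obtain ⟨-, -, -, -, -, h2, h3⟩ := h
  linear_combination (d + f) * h2 + d * h3

lemma eq_of_proportional {D k t : ℝ} (ha : 0 < a) (hb : 0 < b) (hc : 0 < c) (hD : 0 < D)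
    (hk : 0 < k) (hg : 0 < g) (ht : 0 < t) (h : IsStat a b c (D * t) (k * t) g pE pES pEP) :
    pE = (b*D + b*k + c*k) *
        (t / ((b*D + b*k + c*k + (a*D + a*k + D*g)) * t + (a*c + c*g + b*g))) ∧
    a * pE - b * pES = (a*c*k - b*D*g) *
        (t / ((b*D + b*k + c*k + (a*D + a*k + D*g)) * t + (a*c + c*g + b*g))) := by
  have hE := h.mul_pE_eq
  have hES := h.mul_pES_eq
  have hM : 0 < (b*D + b*k + c*k) * t := by positivity
  have hZ : 0 < (b*D + b*k + c*k + (a*D + a*k + D*g)) * t + (a*c + c*g + b*g) := by positivity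
  have hpE : pE = (b*D + b*k + c*k) * t /
      ((b*D + b*k + c*k + (a*D + a*k + D*g)) * t + (a*c + c*g + b*g)) := by
    rw [eq_div_iff hZ.ne']
    linear_combination hE
  have hpES : pES = (a*D + a*k + D*g) * t * pE / ((b*D + b*k + c*k) * t) := by
    rw [eq_div_iff hM.ne']
    linear_combination hES
  refine ⟨by rw [hpE]; ring, ?_⟩
  rw [hpES, hpE]
  field_simp
  ring

lemma with_proportional_rates {k0 k1 kcat S P dmu dGc E1 E2 x y : ℝ}
    (hE2 : y ≤ E2) (hreg : y ≤ x + dmu + dGc)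
    (h : IsStat (k0 * S * min 1 (exp (-(x - E1)))) (k0 * exp E1 * min 1 (exp (x - E1)))
      (kcat * min 1 (exp (x - y + dmu + dGc)))
      (kcat * exp dGc * min 1 (exp (y - x - dmu - dGc)))
      (k1 * exp E2 * min 1 (exp (y - E2))) (k1 * P * min 1 (exp (-(y - E2)))) pE pES pEP) :
    IsStat (k0 * S * min 1 (exp (-(x - E1)))) (k0 * exp E1 * min 1 (exp (x - E1))) kcat
      (kcat * exp (-x - dmu) * exp y) (k1 * exp y) (k1 * P) pE pES pEP := by
  have hc : kcat * min 1 (exp (x - y + dmu + dGc)) = kcat := by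
    rw [min_eq_left (one_le_exp (by linarith)), mul_one]
  have hd :
      kcat * exp dGc * min 1 (exp (y - x - dmu - dGc)) = kcat * exp (-x - dmu) * exp y := by
    rw [mul_assoc, exp_mul_min_one_exp, min_eq_right (exp_le_exp.2 (by linarith)),
      mul_assoc, ← exp_add]
    ring_nf
  have hf : k1 * exp E2 * min 1 (exp (y - E2)) = k1 * exp y := by
    rw [mul_assoc, exp_mul_min_one_exp, min_eq_right (exp_le_exp.2 hE2)]
  have hg : k1 * P * min 1 (exp (-(y - E2))) = k1 * P := by
    rw [min_eq_left (one_le_exp (by linarith)), mul_one]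
  simpa only [hc, hd, hf, hg] using h

end IsStat

/-- Regions I and VI behaviour (non-diffusion model): for fixed `x`, with
product binding diffusion-limited (`y ≤ E2`) and the catalytic step backwards
labile (`y ≤ x + Δμ + ΔGc`), increasing `ΔG_EP` strictly decreases the
sequestered fraction and, when `S·e^Δμ > P`, strictly increases the flux. -/
theorem stmt_17
    (k0 k1 kcat S P dmu dGc E1 E2 : ℝ)
    (hk0 : 0 < k0) (hk1 : 0 < k1) (hkcat : 0 < kcat) (hS : 0 < S) (hP : 0 < P)
    (pE pES pEP R Psi : ℝ → ℝ → ℝ)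
    (hstat : ∀ x y : ℝ,
      IsStat (k0 * S * min 1 (exp (-(x - E1)))) (k0 * exp E1 * min 1 (exp (x - E1)))
        (kcat * min 1 (exp (x - y + dmu + dGc)))
        (kcat * exp dGc * min 1 (exp (y - x - dmu - dGc)))
        (k1 * exp E2 * min 1 (exp (y - E2))) (k1 * P * min 1 (exp (-(y - E2))))
        (pE x y) (pES x y) (pEP x y))
    (hR : ∀ x y : ℝ, R x y = pES x y + pEP x y)
    (hPsi : ∀ x y : ℝ, Psi x y =
      k0 * S * min 1 (exp (-(x - E1))) * pE x y -
        k0 * exp E1 * min 1 (exp (x - E1)) * pES x y)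
    (x y₁ y₂ : ℝ) (hy : y₁ < y₂) (hE2 : y₂ ≤ E2) (hreg : y₂ ≤ x + dmu + dGc) :
    R x y₂ < R x y₁ ∧ (S * exp dmu > P → Psi x y₂ > Psi x y₁) := by
  obtain ⟨hpE₁, hPsi₁⟩ :=
    ((hstat x y₁).with_proportional_rates (by linarith) (by linarith))
    |>.eq_of_proportional (by positivity) (by positivity) hkcat (by positivity) hk1
      (by positivity) (exp_pos y₁)
  obtain ⟨hpE₂, hPsi₂⟩ :=
    ((hstat x y₂).with_proportional_rates hE2 hreg)
    |>.eq_of_proportional (by positivity) (by positivity) hkcat (by positivity) hk1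
      (by positivity) (exp_pos y₂)
  set a := k0 * S * min 1 (exp (-(x - E1)))
  set b := k0 * exp E1 * min 1 (exp (x - E1))
  set D := kcat * exp (-x - dmu)
  have hmono := strictMonoOn_div_mul_add
    (α := b * D + b * k1 + kcat * k1 + (a * D + a * k1 + D * (k1 * P)))
    (C := a * kcat + kcat * (k1 * P) + b * (k1 * P)) (by positivity) (by positivity)
    (exp_pos y₁).le (exp_pos y₂).le (exp_lt_exp.2 hy)
  refine ⟨?_, fun hSP => ?_⟩
  · have hR_pE : ∀ y, R x y = 1 - pE x y := fun y => by
      linarith [hR x y, (hstat x y).2.2.2.1]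
    rw [hR_pE, hR_pE, hpE₁, hpE₂]
    linarith [mul_lt_mul_of_pos_left hmono (by positivity : 0 < b * D + b * k1 + kcat * k1)]
  · rw [hPsi, hPsi, hPsi₁, hPsi₂, flux_prefactor_eq]
    exact mul_lt_mul_of_pos_left hmono (mul_pos (by positivity) (sub_pos.2 hSP))
end

section
/- In the non-diffusion-controlled three-state enzyme model, for every fixed offset w ∈ ℝ, along the line y = x + w one has: lim_{x→∞} π_E(x, x + w) = 1 (equivalently lim_{x→∞} R(x, x + w) = 0), lim_{x→∞} Ψ(x, x + w) = 0, and there exist constants C > 0 and x₀ ∈ ℝ such that |Ψ(x, x + w)| ≤ C·e^(−x) for all x ≥ x₀. -/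
/-!
Far out on the line `y = x + w` the unbinding rates `b` (ES → E) and `f` (EP → E) are frozen at
their maximal values `k0 e^{E1}` and `k1 e^{E2}`, whereas the binding rates `a` and `g` decay like
`e^{-x}`. Balance at `E` reads `b π_ES + f π_EP = (a + g) π_E ≤ a + g`, so the sequestered
fraction is at most `(a + g) / min(b, f) = O(e^{-x})`, and then
`|Ψ| = |a π_E - b π_ES| ≤ a + b R = O(e^{-x})`.
-/

open Real Filter

open Topology

namespace IsStat

variable {a b c d f g pE pES pEP : ℝ}

theorem pE_eq_one_sub (h : IsStat a b c d f g pE pES pEP) : pE = 1 - (pES + pEP) := by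
  linarith [h.2.2.2.1]

theorem sequestered_le (h : IsStat a b c d f g pE pES pEP) (ha : 0 ≤ a) (hg : 0 ≤ g)
    {m ε : ℝ} (hm : 0 < m) (hmb : m ≤ b) (hmf : m ≤ f) (hε : a + g ≤ ε) :
    pES + pEP ≤ ε / m := by
  obtain ⟨hE, hES, hEP, hsum, hbalE, -, -⟩ := h
  rw [le_div_iff₀ hm]
  calc (pES + pEP) * m ≤ b * pES + f * pEP := by nlinarith
    _ = (a + g) * pE := hbalE.symm
    _ ≤ a + g := mul_le_of_le_one_right (by positivity) (by linarith)
    _ ≤ ε := hε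

theorem abs_flux_le (h : IsStat a b c d f g pE pES pEP) (ha : 0 ≤ a) (hb : 0 ≤ b) :
    |a * pE - b * pES| ≤ a + b * (pES + pEP) := by
  obtain ⟨hE, hES, hEP, hsum, -⟩ := h
  apply abs_sub_le_of_nonneg_of_le (by positivity) _ (by positivity) _ <;> nlinarith

end IsStat

theorem min_one_exp_sub_of_le {t s : ℝ} (h : t ≤ s) : min 1 (exp (s - t)) = 1 :=
  min_eq_left (one_le_exp (by linarith))

theorem mul_min_one_exp_neg_sub_le {k : ℝ} (hk : 0 ≤ k) (t s : ℝ) :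
    k * min 1 (exp (-(s - t))) ≤ k * exp t * exp (-s) := by
  rw [mul_assoc, ← exp_add, neg_sub, sub_eq_add_neg]
  exact mul_le_mul_of_nonneg_left (min_le_right _ _) hk

theorem IsStat.bounds_of_saturated {k0 k1 S P E1 E2 c d x y pE pES pEP ε : ℝ}
    (hk0 : 0 < k0) (hk1 : 0 < k1) (hS : 0 ≤ S) (hP : 0 ≤ P)
    (h : IsStat (k0 * S * min 1 (exp (-(x - E1)))) (k0 * exp E1 * min 1 (exp (x - E1))) c d
      (k1 * exp E2 * min 1 (exp (y - E2))) (k1 * P * min 1 (exp (-(y - E2)))) pE pES pEP)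
    (hx : E1 ≤ x) (hy : E2 ≤ y)
    (hε : k0 * S * exp E1 * exp (-x) + k1 * P * exp E2 * exp (-y) ≤ ε) :
    pES + pEP ≤ ε / min (k0 * exp E1) (k1 * exp E2) ∧
      |k0 * S * min 1 (exp (-(x - E1))) * pE - k0 * exp E1 * min 1 (exp (x - E1)) * pES| ≤
        ε + k0 * exp E1 * (ε / min (k0 * exp E1) (k1 * exp E2)) := by
  rw [min_one_exp_sub_of_le hx, min_one_exp_sub_of_le hy, mul_one, mul_one] at h
  rw [min_one_exp_sub_of_le hx, mul_one]
  have ha := mul_min_one_exp_neg_sub_le (by positivity : 0 ≤ k0 * S) E1 x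
  have hg := mul_min_one_exp_neg_sub_le (by positivity : 0 ≤ k1 * P) E2 y
  have hR := h.sequestered_le (ε := ε) (by positivity) (by positivity)
    (lt_min (by positivity) (by positivity)) (min_le_left _ _) (min_le_right _ _) (by linarith)
  refine ⟨hR, (h.abs_flux_le (by positivity) (by positivity)).trans ?_⟩
  have hgy : 0 ≤ k1 * P * exp E2 * exp (-y) := by positivity
  gcongr
  linarith

theorem tendsto_zero_of_abs_le_mul_exp_neg {u : ℝ → ℝ} {C x₀ : ℝ}
    (h : ∀ x, x₀ ≤ x → |u x| ≤ C * exp (-x)) : Tendsto u atTop (𝓝 0) :=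
  squeeze_zero_norm' (eventually_atTop.2 ⟨x₀, h⟩) <| by
    simpa using tendsto_exp_neg_atTop_nhds_zero.const_mul C

theorem stmt_18_general
    (k0 k1 kcat S P dmu dGc E1 E2 : ℝ)
    (hk0 : 0 < k0) (hk1 : 0 < k1) (hS : 0 < S) (hP : 0 < P)
    (pE pES pEP R Psi : ℝ → ℝ → ℝ)
    (hstat : ∀ x y : ℝ,
      IsStat (k0 * S * min 1 (exp (-(x - E1)))) (k0 * exp E1 * min 1 (exp (x - E1)))
        (kcat * min 1 (exp (x - y + dmu + dGc)))
        (kcat * exp dGc * min 1 (exp (y - x - dmu - dGc)))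
        (k1 * exp E2 * min 1 (exp (y - E2))) (k1 * P * min 1 (exp (-(y - E2))))
        (pE x y) (pES x y) (pEP x y))
    (hR : ∀ x y : ℝ, R x y = pES x y + pEP x y)
    (hPsi : ∀ x y : ℝ, Psi x y =
      k0 * S * min 1 (exp (-(x - E1))) * pE x y -
        k0 * exp E1 * min 1 (exp (x - E1)) * pES x y)
    (w : ℝ) :
    Tendsto (fun x : ℝ => pE x (x + w)) atTop (nhds 1) ∧
    Tendsto (fun x : ℝ => R x (x + w)) atTop (nhds 0) ∧
    Tendsto (fun x : ℝ => Psi x (x + w)) atTop (nhds 0) ∧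
    ∃ C : ℝ, 0 < C ∧ ∃ x₀ : ℝ, ∀ x : ℝ, x₀ ≤ x → |Psi x (x + w)| ≤ C * exp (-x) := by
  set m := min (k0 * exp E1) (k1 * exp E2)
  set K := k0 * S * exp E1 + k1 * P * exp E2 * exp (-w)
  have hm : 0 < m := lt_min (by positivity) (by positivity)
  have hbounds : ∀ x, max E1 (E2 - w) ≤ x →
      |R x (x + w)| ≤ K / m * exp (-x) ∧
        |Psi x (x + w)| ≤ (1 + k0 * exp E1 / m) * K * exp (-x) := by
    intro x hx
    have hε :
        k0 * S * exp E1 * exp (-x) + k1 * P * exp E2 * exp (-(x + w)) ≤ K * exp (-x) := by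
      rw [neg_add, exp_add]; linarith
    have hst := hstat x (x + w)
    obtain ⟨hRx, hPsix⟩ := hst.bounds_of_saturated hk0 hk1 hS.le hP.le (le_of_max_le_left hx)
      (by linarith [le_of_max_le_right hx]) hε
    rw [hR, hPsi, abs_of_nonneg (by linarith [hst.2.1, hst.2.2.1])]
    exact ⟨hRx.trans_eq (by ring), hPsix.trans_eq (by ring)⟩
  have hR0 := tendsto_zero_of_abs_le_mul_exp_neg fun x hx => (hbounds x hx).1
  refine ⟨?_, hR0, tendsto_zero_of_abs_le_mul_exp_neg fun x hx => (hbounds x hx).2,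
    _, by positivity, _, fun x hx => (hbounds x hx).2⟩
  simpa [hR, ← (hstat _ _).pE_eq_one_sub] using hR0.const_sub 1

/-- Non-diffusion model: along any line `y = x + w`, as `x → ∞` one has
`π_E → 1` (equivalently `R → 0`), `Ψ → 0`, and `|Ψ(x, x+w)| ≤ C·e^(−x)`
eventually. -/
theorem stmt_18
    (k0 k1 kcat S P dmu dGc E1 E2 : ℝ)
    (hk0 : 0 < k0) (hk1 : 0 < k1) (hkcat : 0 < kcat) (hS : 0 < S) (hP : 0 < P)
    (pE pES pEP R Psi : ℝ → ℝ → ℝ)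
    (hstat : ∀ x y : ℝ,
      IsStat (k0 * S * min 1 (exp (-(x - E1)))) (k0 * exp E1 * min 1 (exp (x - E1)))
        (kcat * min 1 (exp (x - y + dmu + dGc)))
        (kcat * exp dGc * min 1 (exp (y - x - dmu - dGc)))
        (k1 * exp E2 * min 1 (exp (y - E2))) (k1 * P * min 1 (exp (-(y - E2))))
        (pE x y) (pES x y) (pEP x y))
    (hR : ∀ x y : ℝ, R x y = pES x y + pEP x y)
    (hPsi : ∀ x y : ℝ, Psi x y =
      k0 * S * min 1 (exp (-(x - E1))) * pE x y -
        k0 * exp E1 * min 1 (exp (x - E1)) * pES x y)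
    (w : ℝ) :
    Tendsto (fun x : ℝ => pE x (x + w)) atTop (nhds 1) ∧
    Tendsto (fun x : ℝ => R x (x + w)) atTop (nhds 0) ∧
    Tendsto (fun x : ℝ => Psi x (x + w)) atTop (nhds 0) ∧
    ∃ C : ℝ, 0 < C ∧ ∃ x₀ : ℝ, ∀ x : ℝ, x₀ ≤ x → |Psi x (x + w)| ≤ C * exp (-x) :=
  stmt_18_general k0 k1 kcat S P dmu dGc E1 E2 hk0 hk1 hS hP pE pES pEP R Psi hstat hR hPsi w
end
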